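/- With the WaterSIC scaling factors α_i = α·det(Σ_X)^{1/(2n)}/U_{i,i}, let 𝒜 = diag(α_1,…,α_n), let W ∈ ℝⁿ, let Ŵ = c_SIC(U·W), and define the integer output Z = 𝒜^{−1}·Ŵ ∈ ℤⁿ. Then Z ∈ 𝒜^{−1}·W − Ũ·[−1/2, 1/2)ⁿ, where Ũ = α·det(Σ_X)^{1/(2n)}·(U𝒜)^{−1} is an upper triangular matrix with all diagonal entries equal to 1, and in particular det(Ũ) = 1. -/

import Mathlib

open Finset

/-- The SIC (successive interference cancellation) quantizer with respect to an
upper-triangular matrix `U` and per-coordinate spacings `α`, defined by backward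
recursion `c_SIC(y)_i = α_i ⌊(y_i − Σ_{j>i} U_{i,j} c_SIC(y)_j)/(α_i U_{i,i}) + 1/2⌋`. -/
noncomputable def cSIC {n : ℕ} (U : Matrix (Fin n) (Fin n) ℝ) (α : Fin n → ℝ)
    (y : Fin n → ℝ) : Fin n → ℝ
  | i =>
    α i * ((round ((y i - ∑ j ∈ (Finset.univ.filter fun j => i < j).attach,
        U i j.1 * cSIC U α y j.1) / (α i * U i i)) : ℤ) : ℝ)
termination_by i => n - i.1
decreasing_by
  have h := j.2
  simp only [Finset.mem_filter, Finset.mem_univ, true_and] at h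
  have h2 : (j.1 : ℕ) < n := j.1.isLt
  have h3 : (i : ℕ) < (j.1 : ℕ) := h
  omega

/-!
Each SIC step rounds `(y_i - Σ_{j>i} U_ij Ŵ_j) / (α_i U_ii)`, so `Z_i` is an integer and row `i`
of `U Ŵ` equals `y_i - α_i U_ii t_i`, where `t_i ∈ [-1/2, 1/2)` is the rounding error. The WaterSIC
scalings make `α_i U_ii = c := α det(Σ_X)^{1/(2n)}` independent of `i`, so for `y = U W` we get
`U 𝒜 (𝒜⁻¹ W - Z) = c t`, i.e. `Z = 𝒜⁻¹ W - Ũ t`. Since `U 𝒜` is upper triangular with constant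
diagonal `c`, so is its inverse with diagonal `c⁻¹`, and `Ũ = c (U 𝒜)⁻¹` has unit diagonal.
-/

open Matrix

theorem sub_round_mem_Ico {K : Type*} [Field K] [LinearOrder K] [IsStrictOrderedRing K]
    [FloorRing K] (x : K) : x - round x ∈ Set.Ico (-(1 / 2)) (1 / 2) :=
  ⟨by linarith [round_le_add_half x], by linarith [sub_half_lt_round x]⟩

namespace Matrix.IsUpperTriangular

variable {m R : Type*} [Fintype m] [LinearOrder m]

theorem mulVec_apply [NonUnitalNonAssocSemiring R] {M : Matrix m m R}
    (hM : M.IsUpperTriangular) (v : m → R) (i : m) :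
    (M *ᵥ v) i = M i i * v i + ∑ j ∈ univ.filter (i < ·), M i j * v j := by
  rw [mulVec, dotProduct, ← sum_filter_add_sum_filter_not univ (i < ·), add_comm]
  congr 1
  refine sum_eq_single_of_mem i (by simp) fun j hj hji => ?_
  simp only [mem_filter, mem_univ, true_and, not_lt] at hj
  rw [hM (lt_of_le_of_ne hj hji), zero_mul]

theorem mul_apply_self [NonUnitalNonAssocSemiring R] {M N : Matrix m m R}
    (hM : M.IsUpperTriangular) (hN : N.IsUpperTriangular) (i : m) :
    (M * N) i i = M i i * N i i := by
  rw [mul_apply]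
  refine sum_eq_single i (fun k _ hki => ?_) (by simp)
  rcases lt_or_gt_of_ne hki with hk | hk
  · rw [hM hk, zero_mul]
  · rw [hN hk, mul_zero]

theorem det_eq_pow [DecidableEq m] [CommRing R] {M : Matrix m m R} {c : R}
    (hM : M.IsUpperTriangular) (hdiag : ∀ i, M i i = c) : M.det = c ^ Fintype.card m := by
  rw [det_of_isUpperTriangular hM, prod_congr rfl fun i _ => hdiag i, prod_const, card_univ]

theorem inv [DecidableEq m] [CommRing R] {M : Matrix m m R} (hM : M.IsUpperTriangular) :
    M⁻¹.IsUpperTriangular := by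
  by_cases hdet : IsUnit M.det
  · have : Invertible M := M.invertibleOfIsUnitDet hdet
    exact blockTriangular_inv_of_blockTriangular hM
  · rw [nonsing_inv_apply_not_isUnit M hdet]
    exact blockTriangular_zero

theorem inv_apply_self [DecidableEq m] [Field R] {M : Matrix m m R}
    (hM : M.IsUpperTriangular) (hdet : M.det ≠ 0) (i : m) : M⁻¹ i i = (M i i)⁻¹ := by
  have h := hM.inv.mul_apply_self hM i
  rw [nonsing_inv_mul M (isUnit_iff_ne_zero.mpr hdet), one_apply_eq] at h
  exact eq_inv_of_mul_eq_one_left h.symm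

theorem smul_inv_apply_self [DecidableEq m] [Field R] {M : Matrix m m R} {c : R}
    (hM : M.IsUpperTriangular) (hdiag : ∀ i, M i i = c) (hc : c ≠ 0) (i : m) :
    (c • M⁻¹) i i = 1 := by
  have hdet : M.det ≠ 0 := by
    rw [hM.det_eq_pow hdiag]
    exact pow_ne_zero _ hc
  rw [smul_apply, hM.inv_apply_self hdet, hdiag, smul_eq_mul, mul_inv_cancel₀ hc]

theorem det_transpose_mul_self_pos [DecidableEq m] {U : Matrix m m ℝ}
    (hU : U.IsUpperTriangular) (hdiag : ∀ i, 0 < U i i) : 0 < (Uᵀ * U).det := by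
  have hdet : 0 < U.det := by
    rw [det_of_isUpperTriangular hU]
    exact prod_pos fun i _ => hdiag i
  rw [det_mul, det_transpose]
  positivity

end Matrix.IsUpperTriangular

section SIC

variable {n : ℕ} (U : Matrix (Fin n) (Fin n) ℝ) (α y : Fin n → ℝ)

noncomputable def sicArg (i : Fin n) : ℝ :=
  (y i - ∑ j ∈ univ.filter (i < ·), U i j * cSIC U α y j) / (α i * U i i)

noncomputable def sicError (i : Fin n) : ℝ :=
  sicArg U α y i - round (sicArg U α y i)

theorem cSIC_apply (i : Fin n) : cSIC U α y i = α i * round (sicArg U α y i) := by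
  rw [cSIC, sicArg, sum_attach _ fun j => U i j * cSIC U α y j]

theorem cSIC_div_apply {i : Fin n} (hα : α i ≠ 0) :
    cSIC U α y i / α i = round (sicArg U α y i) := by
  rw [cSIC_apply, mul_div_cancel_left₀ _ hα]

theorem sicError_mem_Ico (i : Fin n) : sicError U α y i ∈ Set.Ico (-(1 / 2)) (1 / 2) :=
  sub_round_mem_Ico _

theorem mulVec_cSIC (hU : U.IsUpperTriangular) (hd : ∀ i, α i * U i i ≠ 0) :
    U *ᵥ cSIC U α y = y - fun i => α i * U i i * sicError U α y i := by
  funext i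
  have harg : α i * U i i * sicArg U α y i =
      y i - ∑ j ∈ univ.filter (i < ·), U i j * cSIC U α y j :=
    mul_div_cancel₀ _ (hd i)
  rw [hU.mulVec_apply, cSIC_apply, Pi.sub_apply, sicError, mul_sub, harg]
  ring

end SIC

section WaterSIC

variable {n : ℕ} {U : Matrix (Fin n) (Fin n) ℝ} {α : Fin n → ℝ} {c : ℝ}

theorem mul_diagonal_apply_self_of_mul_eq (hαU : ∀ i, α i * U i i = c) (i : Fin n) :
    (U * diagonal α) i i = c := by
  rw [mul_diagonal, mul_comm, hαU]

theorem div_cSIC_mulVec_eq_sub (hU : U.IsUpperTriangular) (hαU : ∀ i, α i * U i i = c)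
    (hc : c ≠ 0) (W : Fin n → ℝ) :
    (fun i => cSIC U α (U *ᵥ W) i / α i) =
      (fun i => W i / α i) - (c • (U * diagonal α)⁻¹) *ᵥ sicError U α (U *ᵥ W) := by
  set B := U * diagonal α
  set z : Fin n → ℝ := fun i => cSIC U α (U *ᵥ W) i / α i
  set w : Fin n → ℝ := fun i => W i / α i
  have hα : ∀ i, α i ≠ 0 := fun i => left_ne_zero_of_mul ((hαU i).symm ▸ hc)
  have hBtri : B.IsUpperTriangular := hU.mul (blockTriangular_diagonal α)
  have hBdet : B.det ≠ 0 := by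
    rw [hBtri.det_eq_pow (mul_diagonal_apply_self_of_mul_eq hαU)]
    exact pow_ne_zero _ hc
  have hdiag : diagonal α *ᵥ (w - z) = W - cSIC U α (U *ᵥ W) := by
    funext i
    simp only [mulVec_diagonal, Pi.sub_apply, w, z, ← sub_div, mul_div_cancel₀ _ (hα i)]
  have hB : B *ᵥ (w - z) = c • sicError U α (U *ᵥ W) := by
    rw [← mulVec_mulVec, hdiag, mulVec_sub,
      mulVec_cSIC U α (U *ᵥ W) hU fun i => (hαU i).symm ▸ hc]
    funext i
    simp [hαU]
  have hsolve : (c • B⁻¹) *ᵥ sicError U α (U *ᵥ W) = w - z := by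
    rw [smul_mulVec, ← mulVec_smul, ← hB, mulVec_mulVec,
      nonsing_inv_mul B (isUnit_iff_ne_zero.mpr hBdet), one_mulVec]
  rw [hsolve, sub_sub_cancel]

end WaterSIC

theorem waterSIC_integer_output_general {n : ℕ}
    (U : Matrix (Fin n) (Fin n) ℝ)
    (hUtri : ∀ i j : Fin n, j < i → U i j = 0)
    (hUdiag : ∀ i : Fin n, 0 < U i i)
    (α : ℝ) (hα : 0 < α) (W : Fin n → ℝ)
    (αv : Fin n → ℝ)
    (hαv : αv = fun i => α * (U.transpose * U).det ^ ((1 : ℝ) / (2 * n)) / U i i)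
    (What Z : Fin n → ℝ) (hWhat : What = cSIC U αv (U.mulVec W))
    (hZ : Z = fun i => What i / αv i)
    (Ut : Matrix (Fin n) (Fin n) ℝ)
    (hUt : Ut = (α * (U.transpose * U).det ^ ((1 : ℝ) / (2 * n))) •
      (U * Matrix.diagonal αv)⁻¹) :
    (∀ i : Fin n, ∃ m : ℤ, Z i = (m : ℝ)) ∧
    (∃ t : Fin n → ℝ, (∀ i : Fin n, t i ∈ Set.Ico (-(1 / 2) : ℝ) (1 / 2)) ∧
      Z = (fun i => W i / αv i) - Ut.mulVec t) ∧
    (∀ i j : Fin n, j < i → Ut i j = 0) ∧ (∀ i : Fin n, Ut i i = 1) ∧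
    Ut.det = 1 := by
  have hU : U.IsUpperTriangular := fun i j h => hUtri i j h
  set c := α * (Uᵀ * U).det ^ ((1 : ℝ) / (2 * n))
  have hc : 0 < c := mul_pos hα (Real.rpow_pos_of_pos (hU.det_transpose_mul_self_pos hUdiag) _)
  have hαU : ∀ i, αv i * U i i = c := fun i => by rw [hαv]; exact div_mul_cancel₀ c (hUdiag i).ne'
  have hB : (U * diagonal αv).IsUpperTriangular := hU.mul (blockTriangular_diagonal αv)
  have hUt_tri : Ut.IsUpperTriangular := fun i j h => by
    rw [hUt, Matrix.smul_apply, hB.inv h, smul_zero]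
  have hUt_diag : ∀ i, Ut i i = 1 := by
    rw [hUt]
    exact hB.smul_inv_apply_self (mul_diagonal_apply_self_of_mul_eq hαU) hc.ne'
  subst hWhat hZ hUt
  refine ⟨fun i => ⟨round (sicArg U αv (U *ᵥ W) i),
      cSIC_div_apply _ _ _ (left_ne_zero_of_mul ((hαU i).symm ▸ hc.ne'))⟩,
    ⟨sicError U αv (U *ᵥ W), sicError_mem_Ico _ _ _, div_cSIC_mulVec_eq_sub hU hαU hc.ne' W⟩,
    hUt_tri, hUt_diag, by rw [hUt_tri.det_eq_pow hUt_diag, one_pow]⟩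

/-- with WaterSIC scalings `α_i = α·det(Σ_X)^{1/(2n)}/U_{i,i}`
(`Σ_X = UᵀU`, `𝒜 = diag(α_1,…,α_n)`) and `Ŵ = c_SIC(U·W)`, the integer output
`Z = 𝒜⁻¹·Ŵ` satisfies `Z ∈ ℤⁿ` and `Z ∈ 𝒜⁻¹·W − Ũ·[−1/2,1/2)ⁿ`, where
`Ũ = α·det(Σ_X)^{1/(2n)}·(U𝒜)⁻¹` is upper triangular with unit diagonal, and in
particular `det Ũ = 1`. -/
theorem waterSIC_integer_output {n : ℕ} (hn : 1 ≤ n)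
    (U : Matrix (Fin n) (Fin n) ℝ)
    (hUtri : ∀ i j : Fin n, j < i → U i j = 0)
    (hUdiag : ∀ i : Fin n, 0 < U i i)
    (α : ℝ) (hα : 0 < α) (W : Fin n → ℝ)
    (αv : Fin n → ℝ)
    (hαv : αv = fun i => α * (U.transpose * U).det ^ ((1 : ℝ) / (2 * n)) / U i i)
    (What Z : Fin n → ℝ) (hWhat : What = cSIC U αv (U.mulVec W))
    (hZ : Z = fun i => What i / αv i)
    (Ut : Matrix (Fin n) (Fin n) ℝ)
    (hUt : Ut = (α * (U.transpose * U).det ^ ((1 : ℝ) / (2 * n))) •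
      (U * Matrix.diagonal αv)⁻¹) :
    (∀ i : Fin n, ∃ m : ℤ, Z i = (m : ℝ)) ∧
    (∃ t : Fin n → ℝ, (∀ i : Fin n, t i ∈ Set.Ico (-(1 / 2) : ℝ) (1 / 2)) ∧
      Z = (fun i => W i / αv i) - Ut.mulVec t) ∧
    (∀ i j : Fin n, j < i → Ut i j = 0) ∧ (∀ i : Fin n, Ut i i = 1) ∧
    Ut.det = 1 :=
  waterSIC_integer_output_general U hUtri hUdiag α hα W αv hαv What Z hWhat hZ Ut hUt
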